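/- Let E_1 be the equivalence relation on (2^ℕ)^ℕ defined by x E_1 y iff x(m) = y(m) for all sufficiently large m, and let F_k be defined by x F_k y iff x(m) = y(m) for all m ≥ k. If A ⊆ (2^ℕ)^ℕ is analytic and for some k ∈ ℕ the relation E_1 restricted to A has countable index over F_k restricted to A, then the E_1-saturation of A is meager. -/

import Mathlib

/-!
The `E₁`-saturation of `A` is the union over `N ≥ k` of its `F_N`-saturations. Each of these is
analytic, hence has the Baire property (Lusin–Sierpiński). On the `F_N`-saturation, moving the
single coordinate `N` produces only countably many points: two such points come from members of
`A` that are `E₁`-related, hence `F_k`-equivalent to one of countably many sequences `d`, so the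
coordinate `N ≥ k` is one of the countably many `d N`. By Kuratowski–Ulam, a set with the Baire
property whose sections along one factor of `(2^ℕ)^ℕ` are countable, hence meagre in the perfect
space `2^ℕ`, is meagre.
-/

open Set Filter Topology TopologicalSpace MeasureTheory PiNat Function

section BaireProperty

variable {α : Type*} [TopologicalSpace α]

theorem Filter.EventuallyEq.isMeagre_diff {s t : Set α} (h : s =ᵇ t) : IsMeagre (s \ t) :=
  (eventuallyEq_set.1 h).mono fun _ hx hxst => hxst.2 (hx.1 hxst.1)

theorem exists_baireMeasurableSet_hull [SecondCountableTopology α] (s : Set α) :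
    ∃ b, BaireMeasurableSet b ∧ s ⊆ b ∧ b ⊆ closure s ∧
      ∀ t, BaireMeasurableSet t → s ⊆ t → IsMeagre (b \ t) := by
  let 𝒱 := {V ∈ countableBasis α | IsMeagre (V ∩ s)}
  set W := ⋃₀ 𝒱
  have hW : IsOpen W := isOpen_sUnion fun V hV => isOpen_of_mem_countableBasis hV.1
  have hWs : IsMeagre (W ∩ s) := by
    have : IsMeagre (⋃ V ∈ 𝒱, V ∩ s) :=
      isMeagre_biUnion ((countable_countableBasis α).mono (sep_subset _ _)) fun V hV => hV.2
    rwa [← iUnion₂_inter, ← sUnion_eq_biUnion] at this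
  have hmax : ∀ u, IsOpen u → IsMeagre (u ∩ s) → u ⊆ W := fun u hu hus x hx => by
    obtain ⟨V, hVb, hxV, hVu⟩ := (isBasis_countableBasis α).exists_subset_of_mem_open hx hu
    exact mem_sUnion_of_mem hxV ⟨hVb, hus.mono (inter_subset_inter_left _ hVu)⟩
  refine ⟨Wᶜ ∪ (W ∩ s), hW.baireMeasurableSet.compl.union hWs.baireMeasurableSet,
    fun x hx => (em' (x ∈ W)).imp id fun hxW => show x ∈ W ∩ s from ⟨hxW, hx⟩,
    union_subset ?_ (inter_subset_right.trans subset_closure), fun t ht hst => ?_⟩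
  · refine compl_subset_comm.1 (hmax _ isClosed_closure.isOpen_compl (IsMeagre.empty.mono ?_))
    exact fun x hx => hx.1 (subset_closure hx.2)
  · obtain ⟨u, hu, htu⟩ := ht.compl.residualEq_isOpen
    have huW : u ⊆ W := hmax u hu <| htu.symm.isMeagre_diff.mono
      fun x (hx : x ∈ u ∩ s) => show x ∈ u \ tᶜ from ⟨hx.1, (· (hst hx.2))⟩
    refine (htu.isMeagre_diff.union hWs).mono ?_
    rintro x ⟨hxW | hxWs, hxt⟩
    exacts [Or.inl ⟨hxt, fun hxu => hxW (huW hxu)⟩, Or.inr hxWs]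

theorem PiNat.exists_cylinder_subset {β : Type*} [TopologicalSpace β] [DiscreteTopology β]
    {σ : ℕ → β} {s : Set (ℕ → β)} (hs : s ∈ 𝓝 σ) : ∃ n, cylinder σ n ⊆ s := by
  obtain ⟨_, ⟨y, n, rfl⟩, hσ, hs⟩ :=
    (isTopologicalBasis_cylinders fun _ => β).mem_nhds_iff.1 hs
  exact ⟨n, mem_cylinder_iff_eq.1 hσ ▸ hs⟩

theorem PiNat.eq_of_forall_mem_closure_image_cylinder {β : Type*} [TopologicalSpace β]
    [DiscreteTopology β] [T2Space α] {f : (ℕ → β) → α} {σ : ℕ → β}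
    (hf : ContinuousAt f σ) {x : α} (hx : ∀ n, x ∈ closure (f '' cylinder σ n)) :
    x = f σ := by
  refine eq_of_nhds_neBot (ClusterPt.mono ?_ hf)
  refine clusterPt_iff_forall_mem_closure.2 fun s hs => ?_
  obtain ⟨n, hn⟩ := exists_cylinder_subset hs
  exact closure_mono (image_subset_iff.2 hn) (hx n)

theorem PiNat.exists_forall_res {β : Type*} {P : List β → Prop} (h₀ : P [])
    (hP : ∀ l, P l → ∃ b, P (b :: l)) : ∃ σ : ℕ → β, ∀ n, P (res σ n) := by
  choose g hg using fun l : {l // P l} => hP l.1 l.2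
  let L : ℕ → {l // P l} := fun n => Nat.rec ⟨[], h₀⟩ (fun _ l => ⟨g l :: l, hg l⟩) n
  have hres : ∀ n, res (fun n => g (L n)) n = (L n).1 := by
    intro n
    induction n with
    | zero => rfl
    | succ n ih => rw [res_succ, ih]
  exact ⟨fun n => g (L n), fun n => hres n ▸ (L n).2⟩

/-- **Lusin–Sierpiński** -/
theorem MeasureTheory.AnalyticSet.baireMeasurableSet [T2Space α] [SecondCountableTopology α]
    {s : Set α} (hs : AnalyticSet s) : BaireMeasurableSet s := by
  rw [AnalyticSet] at hs
  rcases hs with rfl | ⟨f, hf, rfl⟩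
  · exact IsMeagre.empty.baireMeasurableSet
  -- Off the meagre set `M`, a point of the hull `b []` of `range f` lies in the hulls `b l` along
  -- a whole branch `σ`, so it is in the closure of every `f '' cylinder σ n`, i.e. it is `f σ`.
  choose b hb hfb hbcl hbmin using
    fun l : List ℕ => exists_baireMeasurableSet_hull (f '' {τ | res τ l.length = l})
  set M := ⋃ l, b l \ ⋃ i, b (i :: l)
  have hM : IsMeagre M := isMeagre_iUnion fun l => hbmin l _ (.iUnion fun i => hb _) <| by
    rintro _ ⟨τ, hτ, rfl⟩
    exact mem_iUnion.2 ⟨τ l.length, hfb _ ⟨τ, by simpa using hτ, rfl⟩⟩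
  have hrange : range f ⊆ b [] := by simpa using hfb []
  have hdiff : b [] \ range f ⊆ M := by
    rintro x ⟨hxb, hxf⟩
    by_contra hxM
    obtain ⟨σ, hσ⟩ := exists_forall_res (P := fun l => x ∈ b l) hxb fun l hl => by
      by_contra! h
      exact hxM (mem_iUnion.2 ⟨l, hl, by simpa using h⟩)
    refine hxf ⟨σ, (eq_of_forall_mem_closure_image_cylinder hf.continuousAt fun n => ?_).symm⟩
    simpa [cylinder_eq_res] using hbcl _ (hσ n)
  simpa [sdiff_sdiff_cancel_left hrange] using
    (hb []).diff (hM.mono hdiff).baireMeasurableSet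

end BaireProperty

section KuratowskiUlam

variable {X Y : Type*} [TopologicalSpace X] [TopologicalSpace Y]

theorem IsNowhereDense.eventually_isNowhereDense_preimage_prodMk [SecondCountableTopology Y]
    {F : Set (X × Y)} (hF : IsNowhereDense F) :
    ∀ᶠ x in residual X, IsNowhereDense (Prod.mk x ⁻¹' F) := by
  wlog hFc : IsClosed F generalizing F
  · exact (this hF.closure isClosed_closure).mono fun x hx =>
      hx.mono (preimage_mono subset_closure)
  let K : Set Y → Set X := fun W => ⋂ y ∈ W, (·, y) ⁻¹' F
  have hK : ∀ W ∈ countableBasis Y, W.Nonempty → IsNowhereDense (K W) := by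
    rintro W hW ⟨y, hy⟩
    have hKc : IsClosed (K W) :=
      isClosed_biInter fun y _ => hFc.preimage (continuous_id.prodMk continuous_const)
    refine hKc.isNowhereDense_iff.2 (eq_empty_of_forall_notMem fun x hx => ?_)
    have hsub : interior (K W) ×ˢ W ⊆ F := fun p hp =>
      mem_iInter₂.1 (interior_subset hp.1) p.2 hp.2
    have hopen : IsOpen (interior (K W) ×ˢ W) :=
      isOpen_interior.prod (isOpen_of_mem_countableBasis hW)
    rw [hFc.isNowhereDense_iff] at hF
    simpa [hF] using interior_maximal hsub hopen (mk_mem_prod hx hy)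
  have hbad : IsMeagre (⋃ W ∈ {W ∈ countableBasis Y | W.Nonempty}, K W) :=
    isMeagre_biUnion ((countable_countableBasis Y).mono (sep_subset _ _))
      fun W hW => (hK W hW.1 hW.2).isMeagre
  refine mem_of_superset hbad fun x hx => ?_
  refine (hFc.preimage (by fun_prop)).isNowhereDense_iff.2
    (eq_empty_of_forall_notMem fun y hy => ?_)
  obtain ⟨W, hW, hyW, hWsub⟩ :=
    (isBasis_countableBasis Y).exists_subset_of_mem_open hy isOpen_interior
  exact hx <| mem_biUnion ⟨hW, y, hyW⟩ <|
    mem_iInter₂.2 fun _ hy' => interior_subset (s := Prod.mk x ⁻¹' F) (hWsub hy')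

/-- **Kuratowski–Ulam** -/
theorem IsMeagre.eventually_isMeagre_preimage_prodMk [SecondCountableTopology Y]
    {M : Set (X × Y)} (hM : IsMeagre M) :
    ∀ᶠ x in residual X, IsMeagre (Prod.mk x ⁻¹' M) := by
  obtain ⟨S, hS, hSc, hMS⟩ := isMeagre_iff_countable_union_isNowhereDense.1 hM
  filter_upwards [(eventually_countable_ball hSc).2 fun F hF =>
    (hS F hF).eventually_isNowhereDense_preimage_prodMk] with x hx
  rw [isMeagre_iff_countable_union_isNowhereDense]
  refine ⟨(Prod.mk x ⁻¹' ·) '' S, forall_mem_image.2 hx, hSc.image _, ?_⟩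
  rw [sUnion_image, ← preimage_iUnion₂, ← sUnion_eq_biUnion]
  exact preimage_mono hMS

theorem Set.Countable.isMeagre [T1Space Y] [PerfectSpace Y] {s : Set Y} (hs : s.Countable) :
    IsMeagre s := by
  rw [← biUnion_of_singleton s]
  exact isMeagre_biUnion hs fun y _ =>
    (isClosed_singleton.isNowhereDense_iff.2 (interior_singleton y)).isMeagre

theorem isMeagre_of_countable_preimage_prodMk [BaireSpace X] [BaireSpace Y]
    [SecondCountableTopology Y] [T1Space Y] [PerfectSpace Y] {B : Set (X × Y)}
    (hB : BaireMeasurableSet B) (hsec : ∀ x, (Prod.mk x ⁻¹' B).Countable) : IsMeagre B := by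
  obtain ⟨u, hu, hBu⟩ := hB.residualEq_isOpen
  suffices u = ∅ by simpa [this] using hBu.isMeagre_diff
  -- For generic `x ∈ U`, the open set `V` is covered by the meagre section of `u \ B` and the
  -- countable section of `B`.
  by_contra! ⟨⟨x₀, y₀⟩, hu₀⟩
  obtain ⟨U, V, hU, hV, hx₀, hy₀, hUV⟩ := isOpen_prod_iff.1 hu x₀ y₀ hu₀
  obtain ⟨x, hxU, hx⟩ := (dense_of_mem_residual
    hBu.symm.isMeagre_diff.eventually_isMeagre_preimage_prodMk).inter_open_nonempty
      U hU ⟨x₀, hx₀⟩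
  refine not_isMeagre_of_isOpen hV ⟨y₀, hy₀⟩
    ((hx.union (hsec x).isMeagre).mono fun y hy => ?_)
  by_cases hyB : (x, y) ∈ B
  exacts [Or.inr hyB, Or.inl ⟨hUV ⟨hxU, hy⟩, hyB⟩]

end KuratowskiUlam

instance Pi.perfectSpace {ι : Type*} [Infinite ι] {Y : ι → Type*}
    [∀ i, TopologicalSpace (Y i)] [∀ i, Nontrivial (Y i)] : PerfectSpace (∀ i, Y i) := by
  classical
  refine perfectSpace_iff_forall_not_isolated.2 fun x => mem_closure_iff_nhdsWithin_neBot.1 ?_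
  refine mem_closure_iff_nhds.2 fun t ht => ?_
  rw [nhds_pi, Filter.mem_pi] at ht
  obtain ⟨I, hI, u, hu, hIt⟩ := ht
  obtain ⟨i, hi⟩ := hI.infinite_compl.nonempty
  obtain ⟨y, hy⟩ := exists_ne (x i)
  refine ⟨update x i y, hIt fun j hj => ?_, fun h => hy (by simpa using congrFun h i)⟩
  rw [update_of_ne (ne_of_mem_of_not_mem hj hi)]
  exact mem_of_mem_nhds (hu j)

theorem isMeagre_of_countable_update_sections {ι Y : Type*} [DecidableEq ι]
    [TopologicalSpace Y] [CompactSpace Y] [T2Space Y] [SecondCountableTopology Y]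
    [PerfectSpace Y] {B : Set (ι → Y)} (hB : BaireMeasurableSet B) (i : ι)
    (hsec : ∀ z ∈ B, {y | update z i y ∈ B}.Countable) : IsMeagre B := by
  let e := (Homeomorph.piSplitAt i fun _ => Y).trans (Homeomorph.prodComm _ _)
  have he : ∀ w y y', e.symm (w, y) = update (e.symm (w, y')) i y := fun w y y' => by
    ext j
    by_cases hj : j = i
    · subst hj; simp [e]
    · simp [e, hj]
  have hB' : IsMeagre (e.symm ⁻¹' B) := by
    refine isMeagre_of_countable_preimage_prodMk
      (hB.preimage e.symm.continuous e.symm.isOpenMap) fun w => ?_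
    rcases eq_empty_or_nonempty (Prod.mk w ⁻¹' (e.symm ⁻¹' B)) with h | ⟨y₀, hy₀⟩
    · rw [h]; exact countable_empty
    · convert hsec _ hy₀ using 1
      ext y
      exact iff_of_eq (congrArg (· ∈ B) (he w y y₀))
  convert hB'.preimage_of_isOpenMap e.continuous e.isOpenMap
  ext; simp

/-- The `F_N`-saturation of `A`. -/
def tailSaturation {Z : Type*} (N : ℕ) (A : Set (ℕ → Z)) : Set (ℕ → Z) :=
  {y | ∃ x ∈ A, ∀ m ≥ N, x m = y m}

theorem tailSaturation_eq_preimage_image {Z : Type*} (N : ℕ) (A : Set (ℕ → Z)) :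
    tailSaturation N A = (fun y m => y (m + N)) ⁻¹' ((fun y m => y (m + N)) '' A) := by
  ext y
  simp only [tailSaturation, mem_preimage, mem_image, funext_iff]
  refine exists_congr fun x => and_congr_right fun _ =>
    ⟨fun h m => h _ (by omega), fun h m hm => ?_⟩
  obtain ⟨j, rfl⟩ := Nat.exists_eq_add_of_le' hm
  exact h j

theorem MeasureTheory.AnalyticSet.tailSaturation {Z : Type*} [TopologicalSpace Z]
    [SecondCountableTopology Z] [IsCompletelyMetrizableSpace Z] {A : Set (ℕ → Z)}
    (hA : AnalyticSet A) (N : ℕ) : AnalyticSet (tailSaturation N A) := by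
  have : PolishSpace (ℕ → Z) := {}
  have hshift : Continuous fun (y : ℕ → Z) m => y (m + N) := by fun_prop
  rw [tailSaturation_eq_preimage_image]
  exact (hA.image_of_continuous hshift).preimage hshift

theorem countable_update_mem_tailSaturation {Z : Type*} {k N : ℕ} (hkN : k ≤ N)
    {A : Set (ℕ → Z)}
    (h : ∀ x ∈ A, ∃ D : Set (ℕ → Z), D.Countable ∧
      ∀ y ∈ A, (∃ n, ∀ m ≥ n, x m = y m) → ∃ d ∈ D, ∀ m ≥ k, y m = d m)
    {z : ℕ → Z} (hz : z ∈ tailSaturation N A) :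
    {y | update z N y ∈ tailSaturation N A}.Countable := by
  obtain ⟨x, hxA, hxz⟩ := hz
  obtain ⟨D, hD, hxD⟩ := h x hxA
  refine (hD.image (· N)).mono fun y ⟨x', hx'A, hx'⟩ => ?_
  obtain ⟨d, hdD, hd⟩ := hxD x' hx'A ⟨N + 1, fun m hm => by
    rw [hxz m (by omega), hx' m (by omega), update_of_ne (by omega)]⟩
  exact ⟨d, hdD, show d N = y by rw [← hd N hkN, hx' N le_rfl, update_self]⟩

/-- If `A ⊆ (2^ℕ)^ℕ` is analytic and `E₁` has countable index over `F_k`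
on `A` for some `k`, then the `E₁`-saturation of `A` is meager. -/
theorem statement2 (k : ℕ) (A : Set (ℕ → ℕ → Bool))
    (hA : MeasureTheory.AnalyticSet A)
    (h : ∀ x ∈ A, ∃ D : Set (ℕ → ℕ → Bool), D.Countable ∧
      ∀ y ∈ A, (∃ n, ∀ m ≥ n, x m = y m) → ∃ d ∈ D, ∀ m ≥ k, y m = d m) :
    IsMeagre {y : ℕ → ℕ → Bool | ∃ x ∈ A, ∃ n, ∀ m ≥ n, x m = y m} := by
  have hsat :
      {y | ∃ x ∈ A, ∃ n, ∀ m ≥ n, x m = y m} ⊆ ⋃ N, tailSaturation (N + k) A :=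
    fun y ⟨x, hxA, n, hn⟩ => mem_iUnion.2 ⟨n, x, hxA, fun m hm => hn m (by omega)⟩
  refine (isMeagre_iUnion fun N => ?_).mono hsat
  exact isMeagre_of_countable_update_sections (hA.tailSaturation _).baireMeasurableSet
    (N + k) fun z hz => countable_update_mem_tailSaturation (by omega) h hz
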